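/- Let (σ, α) be a combinatorial map on a finite set H with |H| = 2n (n ≥ 1), rooted at r, with a left-connected orientation (I, O), and let τ be the permutation of H produced by the unfolding construction. Then: (a) the permutations τ and α generate a subgroup acting transitively on H; (b) τ has exactly n+1 orbits on H, so that (τ, α) is a plane tree with n edges; (c) every orbit of τ on H contains at most one element of I, so that (I,O) is the root-to-leaves orientation of this tree. -/

import Mathlib

/-- First-return restriction of `f` to `S`, viewed as a map on the whole set
(acting as the identity outside `S`). -/
noncomputable def restrictFun {X : Type*} (f : X → X) (S : Set X) (x : X) : X := by
  classical
  exact if hx : x ∈ S ∧ ∃ k : ℕ, 0 < k ∧ f^[k] x ∈ S then f^[Nat.find hx.2] x else x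

/-- `(σ,α)` is a combinatorial map. -/
def IsCombMap {X : Type*} (σ α : Equiv.Perm X) : Prop :=
  (∀ h, α h ≠ h) ∧ (∀ h, α (α h) = h) ∧
    ∀ x y : X, ∃ g ∈ Subgroup.closure ({σ, α} : Set (Equiv.Perm X)), g x = y

/-- The backward function of an orientation with ingoing set `I`. -/
noncomputable def backward {X : Type*} (σ α : Equiv.Perm X) (I : Set X) (h : X) : X := by
  classical
  exact if h ∈ I then σ (α h) else σ h

/-- The number of orbits of `f` on `S` (forward orbits inside `S`). -/
noncomputable def numOrbitsOn {X : Type*} (f : X → X) (S : Set X) : ℕ :=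
  ((fun x => {y | y ∈ S ∧ ∃ k : ℕ, f^[k] x = y}) '' S).ncard

/-- `H' = H ⊕ Bool`, where `i = Sum.inr true` and `o = Sum.inr false` are the two new
half-edges. The extended edge-involution `α'` acts as `α` on `H` and swaps `i` and `o`. -/
def alphaExt {H : Type*} (α : Equiv.Perm H) : Equiv.Perm (H ⊕ Bool) :=
  Equiv.sumCongr α (Equiv.swap true false)

/-- The extended vertex-permutation `σ'` of the unfolding construction: `σ' i = r`,
`σ' (σ⁻¹ r) = i`, `σ' o = o` and `σ' = σ` elsewhere. -/
noncomputable def sigmaExt {H : Type*} (σ : Equiv.Perm H) (r : H) :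
    Equiv.Perm (H ⊕ Bool) := by
  classical
  exact Equiv.sumCongr σ (1 : Equiv.Perm Bool) *
    Equiv.swap (Sum.inr true) (Sum.inl (σ⁻¹ r))

/-!
Let `σ'` be the extended vertex permutation and `S = I' ∪ {o}`. Left-connectivity makes every
`σ'`-orbit reach `S`, and since `o` is fixed, `π_∘` is the first-return map of `σ'` on `S`.
Sending a point to the first point of `S` on its forward `σ'`-orbit is invariant under
`σ' π_∘⁻¹`, so every cycle of `σ' π_∘⁻¹` contains exactly one point of `S`. The cycles of its
first-return map `τ` on `H` are the traces of these cycles on `H`: one through each point of `I`,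
and the one through `i`, which also passes through `σ⁻¹ r`. Thus `I ∪ {σ⁻¹ r}` meets every
`τ`-cycle exactly once, which gives (b) and (c). For (a), `τ` agrees with `σ` off `I ∪ {σ⁻¹ r}`,
so each step of the backward function is a product of `τ` and `α` unless it starts at `σ⁻¹ r`
or its image under `α`, and the backward path from any half-edge to `r` links it to `σ⁻¹ r`.
-/

open Equiv Equiv.Perm Function

section FirstReturn

variable {X : Type*}

def IsFirstReturn (f : X → X) (S : Set X) (x y : X) : Prop :=
  ∃ k, 0 < k ∧ f^[k] x = y ∧ y ∈ S ∧ ∀ j, 0 < j → j < k → f^[j] x ∉ S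

theorem restrictFun_of_notMem (f : X → X) {S : Set X} {x : X} (hx : x ∉ S) :
    restrictFun f S x = x := by
  simp [restrictFun, hx]

theorem restrictFun_eq_of_isFirstReturn {f : X → X} {S : Set X} {x y : X} (hx : x ∈ S)
    (h : IsFirstReturn f S x y) : restrictFun f S x = y := by
  classical
  obtain ⟨k, hk, rfl, hyS, hmin⟩ := h
  have hret : x ∈ S ∧ ∃ k : ℕ, 0 < k ∧ f^[k] x ∈ S := ⟨hx, k, hk, hyS⟩
  unfold restrictFun
  rw [dif_pos hret, (Nat.find_eq_iff _).2 ⟨⟨hk, hyS⟩, fun j hjk hj => hmin j hj.1 hjk hj.2⟩]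

theorem isFirstReturn_restrictFun [Finite X] (f : Perm X) {S : Set X} {x : X} (hx : x ∈ S) :
    IsFirstReturn f S x (restrictFun f S x) := by
  classical
  obtain ⟨p, hp, hpx⟩ := mem_periodicPts.1 (f.injective.mem_periodicPts x)
  have hret : ∃ k : ℕ, 0 < k ∧ f^[k] x ∈ S := ⟨p, hp, by rwa [hpx.eq]⟩
  unfold restrictFun
  rw [dif_pos ⟨hx, hret⟩]
  exact ⟨_, (Nat.find_spec hret).1, rfl, (Nat.find_spec hret).2,
    fun j hj hjk hjS => Nat.find_min hret hjk ⟨hj, hjS⟩⟩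

theorem restrictFun_union_singleton_of_apply_eq [Finite X] (f : Perm X) (S : Set X) {a : X}
    (ha : f a = a) : restrictFun f (S ∪ {a}) = restrictFun f S := by
  funext x
  by_cases hxS : x ∈ S
  · obtain ⟨k, hk, hkx, hyS, hmin⟩ := isFirstReturn_restrictFun f hxS
    refine restrictFun_eq_of_isFirstReturn (.inl hxS)
      ⟨k, hk, hkx, .inl hyS, fun j hj hjk hjS => hjS.elim (hmin j hj hjk) fun hja => ?_⟩
    have hxa : x = a := (f.injective.iterate j) (hja.trans (iterate_fixed ha j).symm)
    exact hmin j hj hjk (hja ▸ hxa ▸ hxS)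
  · rw [restrictFun_of_notMem f hxS]
    by_cases hxa : x = a
    · subst hxa
      exact restrictFun_eq_of_isFirstReturn (.inr rfl) ⟨1, one_pos, ha, .inr rfl, by omega⟩
    · exact restrictFun_of_notMem f (by simp [hxS, hxa])

end FirstReturn

def IsCycleTransversal {X : Type*} (t : Perm X) (T : Set X) : Prop :=
  (∀ x, ∃ y ∈ T, t.SameCycle x y) ∧ ∀ x ∈ T, ∀ y ∈ T, t.SameCycle x y → x = y

theorem numOrbitsOn_univ_eq_ncard {X : Type*} [Finite X] {t : Perm X} {T : Set X}
    (hT : IsCycleTransversal t T) : numOrbitsOn t Set.univ = T.ncard := by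
  have horbit : (fun x => {y | y ∈ Set.univ ∧ ∃ k : ℕ, (⇑t)^[k] x = y}) =
      fun x => {y | t.SameCycle x y} := by
    funext x
    ext y
    simp only [Set.mem_univ, true_and, Set.mem_ofPred_eq, iterate_eq_pow]
    exact ⟨fun ⟨k, hk⟩ => ⟨k, by simpa using hk⟩, SameCycle.exists_nat_pow_eq⟩
  have himage : (fun x => {y | t.SameCycle x y}) '' Set.univ =
      (fun x => {y | t.SameCycle x y}) '' T := by
    refine (Set.image_mono (Set.subset_univ T)).antisymm' ?_
    rintro _ ⟨x, -, rfl⟩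
    obtain ⟨y, hy, hxy⟩ := hT.1 x
    exact ⟨y, hy, Set.ext fun z => ⟨hxy.trans, hxy.symm.trans⟩⟩
  rw [numOrbitsOn, horbit, himage, Set.InjOn.ncard_image]
  intro x hx y hy hxy
  exact hT.2 x hx y hy ((Set.ext_iff.1 hxy y).2 (SameCycle.refl t y))

section FirstHit

variable {X : Type*} (F : Perm X) {S : Set X} (hreach : ∀ x, ∃ k, (⇑F)^[k] x ∈ S)

noncomputable def firstHit (x : X) : X := by
  classical
  exact (⇑F)^[Nat.find (hreach x)] x

theorem exists_iterate_eq_firstHit (x : X) :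
    ∃ k, (⇑F)^[k] x = firstHit F hreach x ∧ ∀ j < k, (⇑F)^[j] x ∉ S := by
  classical
  exact ⟨_, rfl, fun j => Nat.find_min (hreach x)⟩

theorem firstHit_mem (x : X) : firstHit F hreach x ∈ S := by
  classical
  exact Nat.find_spec (hreach x)

theorem firstHit_eq_iterate {x : X} {k : ℕ} (hk : (⇑F)^[k] x ∈ S)
    (hmin : ∀ j < k, (⇑F)^[j] x ∉ S) : firstHit F hreach x = (⇑F)^[k] x := by
  classical
  unfold firstHit
  rw [(Nat.find_eq_iff _).2 ⟨hk, hmin⟩]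

theorem firstHit_of_mem {x : X} (hx : x ∈ S) : firstHit F hreach x = x :=
  firstHit_eq_iterate F hreach (k := 0) hx (by simp)

theorem firstHit_apply_of_notMem {x : X} (hx : x ∉ S) :
    firstHit F hreach (F x) = firstHit F hreach x := by
  obtain ⟨k, hk, hmin⟩ := exists_iterate_eq_firstHit F hreach x
  obtain ⟨k, rfl⟩ : ∃ m, k = m + 1 :=
    Nat.exists_eq_succ_of_ne_zero fun h0 => hx (by subst h0; rw [iterate_zero_apply] at hk; exact hk ▸ firstHit_mem F hreach x)
  rw [← hk, iterate_succ_apply]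
  refine firstHit_eq_iterate F hreach ?_ fun j hj => ?_
  · rw [← iterate_succ_apply, hk]
    exact firstHit_mem F hreach x
  · rw [← iterate_succ_apply]
    exact hmin _ (by omega)

variable {F} {P : Perm X}

theorem inv_apply_of_notMem_of_restrictFun (hP : ⇑P = restrictFun F S) {x : X} (hx : x ∉ S) :
    P⁻¹ x = x :=
  inv_eq_iff_eq.2 (by rw [hP, restrictFun_of_notMem F hx])

theorem firstHit_mul_inv_apply [Finite X] (hP : ⇑P = restrictFun F S) (x : X) :
    firstHit F hreach ((F * P⁻¹) x) = firstHit F hreach x := by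
  by_cases hx : x ∈ S
  · set z := P⁻¹ x
    have hPz : P z = x := P.apply_symm_apply x
    have hz : z ∈ S := by
      by_contra hz
      have hPz' : P z = z := by rw [hP, restrictFun_of_notMem F hz]
      exact hz (hPz'.symm.trans hPz ▸ hx)
    obtain ⟨k, hk, hkx, hxS, hmin⟩ := isFirstReturn_restrictFun F hz
    rw [← hP, hPz] at hkx
    obtain ⟨m, rfl⟩ : ∃ m, k = m + 1 := ⟨k - 1, by omega⟩
    rw [firstHit_of_mem F hreach hx, mul_apply]
    refine (firstHit_eq_iterate F hreach (k := m) ?_ fun j hj => ?_).trans ?_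
    · rwa [← iterate_succ_apply, hkx]
    · rw [← iterate_succ_apply]
      exact hmin _ j.succ_pos (by omega)
    · rw [← iterate_succ_apply, hkx]
  · rw [mul_apply, inv_apply_of_notMem_of_restrictFun hP hx, firstHit_apply_of_notMem F hreach hx]

theorem sameCycle_firstHit (hP : ⇑P = restrictFun F S) (x : X) :
    (F * P⁻¹).SameCycle x (firstHit F hreach x) := by
  obtain ⟨k, hk, hmin⟩ := exists_iterate_eq_firstHit F hreach x
  -- before the first hit of `S`, `P⁻¹` acts trivially
  have hagree : ∀ j ≤ k, (⇑(F * P⁻¹))^[j] x = (⇑F)^[j] x := by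
    intro j hj
    induction j with
    | zero => rfl
    | succ j ih =>
      rw [iterate_succ_apply', iterate_succ_apply', ih (by omega), mul_apply,
        inv_apply_of_notMem_of_restrictFun hP (hmin j (by omega))]
  exact ⟨k, by rw [zpow_natCast, ← hk, ← hagree k le_rfl, iterate_eq_pow]⟩

theorem firstHit_eq_of_sameCycle [Finite X] (hP : ⇑P = restrictFun F S) {x y : X}
    (h : (F * P⁻¹).SameCycle x y) : firstHit F hreach x = firstHit F hreach y := by
  obtain ⟨n, rfl⟩ := h.exists_nat_pow_eq
  rw [← iterate_eq_pow]
  exact (congrFun (iterate_invariant (funext (firstHit_mul_inv_apply hreach hP)) n) x).symm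

end FirstHit

theorem isCycleTransversal_mul_inv_of_restrictFun {X : Type*} [Finite X] {F P : Perm X}
    {S : Set X} (hreach : ∀ x, ∃ k, (⇑F)^[k] x ∈ S) (hP : ⇑P = restrictFun F S) :
    IsCycleTransversal (F * P⁻¹) S := by
  refine ⟨fun x => ⟨_, firstHit_mem F hreach x, sameCycle_firstHit hreach hP x⟩,
    fun x hx y hy hxy => ?_⟩
  rw [← firstHit_of_mem F hreach hx, ← firstHit_of_mem F hreach hy,
    firstHit_eq_of_sameCycle hreach hP hxy]

theorem sameCycle_iff_of_restrictFun_range {X Y : Type*} [Finite X] [Finite Y] {F : Perm Y}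
    {t : Perm X} {g : X → Y} (hg : Injective g)
    (ht : ∀ x, g (t x) = restrictFun F (Set.range g) (g x)) {x y : X} :
    t.SameCycle x y ↔ F.SameCycle (g x) (g y) := by
  have hret : ∀ x, IsFirstReturn F (Set.range g) (g x) (g (t x)) := fun x =>
    ht x ▸ isFirstReturn_restrictFun F ⟨x, rfl⟩
  constructor
  · intro h
    obtain ⟨n, rfl⟩ := h.exists_nat_pow_eq
    clear h
    rw [← iterate_eq_pow]
    induction n with
    | zero => rfl
    | succ n ih =>
      obtain ⟨k, -, hk, -⟩ := hret ((⇑t)^[n] x)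
      rw [iterate_succ_apply', ← hk, iterate_eq_pow]
      exact sameCycle_pow_right.2 ih
  · intro h
    obtain ⟨n, hn⟩ := h.exists_nat_pow_eq
    clear h
    rw [← iterate_eq_pow] at hn
    induction n using Nat.strong_induction_on generalizing x with
    | _ n ih =>
      rcases n.eq_zero_or_pos with rfl | hn0
      · exact hg hn ▸ SameCycle.refl t x
      · obtain ⟨k, hk, hkx, -, hmin⟩ := hret x
        have hkn : k ≤ n := not_lt.1 fun hnk => hmin n hn0 hnk ⟨y, hn.symm⟩
        have hrest : (⇑F)^[n - k] (g (t x)) = g y := by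
          rw [← hkx, ← iterate_add_apply, Nat.sub_add_cancel hkn, hn]
        exact sameCycle_apply_right.2 (SameCycle.refl t x) |>.trans (ih (n - k) (by omega) hrest)

theorem two_mul_ncard_eq_natCard_of_image_eq {X : Type*} [Finite X] {α : Perm X} {I O : Set X}
    (hpart : I ∪ O = Set.univ) (hdisj : I ∩ O = ∅) (hIO : α '' I = O) :
    2 * I.ncard = Nat.card X := by
  rw [← Set.ncard_univ, ← hpart, Set.ncard_union_eq (Set.disjoint_iff_inter_eq_empty.2 hdisj),
    ← hIO, Set.ncard_image_of_injective I α.injective, two_mul]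

section Unfolding

variable {H : Type*}

theorem sigmaExt_inl_of_ne (σ : Perm H) (r : H) {h : H} (hh : h ≠ σ⁻¹ r) :
    sigmaExt σ r (Sum.inl h) = Sum.inl (σ h) := by
  classical
  rw [sigmaExt, mul_apply, swap_apply_of_ne_of_ne (by simp) (by simpa using hh)]
  simp

theorem sigmaExt_inl_inv_apply (σ : Perm H) (r : H) :
    sigmaExt σ r (Sum.inl (σ⁻¹ r)) = Sum.inr true := by
  classical
  rw [sigmaExt, mul_apply, swap_apply_right]
  simp

theorem sigmaExt_inr_false (σ : Perm H) (r : H) :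
    sigmaExt σ r (Sum.inr false) = Sum.inr false := by
  classical
  rw [sigmaExt, mul_apply, swap_apply_of_ne_of_ne (by simp) (by simp)]
  simp

variable {σ α : Perm H} {r : H} {I : Set H}

theorem backward_of_mem {h : H} (hh : h ∈ I) : backward σ α I h = σ (α h) := by
  simp [backward, hh]

theorem backward_of_notMem {h : H} (hh : h ∉ I) : backward σ α I h = σ h := by
  simp [backward, hh]

open Classical in
theorem inv_apply_eq_of_backward_eq {h : H} (hb : backward σ α I h = r) :
    σ⁻¹ r = if h ∈ I then α h else h := by
  split_ifs with hh
  · rw [backward_of_mem hh] at hb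
    exact inv_eq_iff_eq.2 hb.symm
  · rw [backward_of_notMem hh] at hb
    exact inv_eq_iff_eq.2 hb.symm

theorem inv_apply_notMem (hαI : ∀ h ∈ I, α h ∉ I)
    (hlc : ∀ h : H, ∃ q : ℕ, 0 < q ∧ (backward σ α I)^[q] h = r) : σ⁻¹ r ∉ I := by
  obtain ⟨q, hq, hqr⟩ := hlc r
  obtain ⟨q, rfl⟩ : ∃ m, q = m + 1 := ⟨q - 1, by omega⟩
  rw [iterate_succ_apply'] at hqr
  rw [inv_apply_eq_of_backward_eq hqr]
  split_ifs with hI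
  exacts [hαI _ hI, hI]

theorem exists_iterate_sigmaExt_mem
    (hlc : ∀ h : H, ∃ q : ℕ, 0 < q ∧ (backward σ α I)^[q] h = r) (z : H ⊕ Bool) :
    ∃ k, (⇑(sigmaExt σ r))^[k] z ∈ (Sum.inl '' I ∪ {Sum.inr true}) ∪ {Sum.inr false} := by
  rcases z with h | b
  swap
  · exact ⟨0, by cases b <;> simp⟩
  by_contra! hout
  -- off `S`, `σ'` follows the backward function
  have hiter : ∀ k, (⇑(sigmaExt σ r))^[k] (Sum.inl h) = Sum.inl ((backward σ α I)^[k] h) := by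
    intro k
    induction k with
    | zero => rfl
    | succ k ih =>
      have hI : (backward σ α I)^[k] h ∉ I := fun hI => hout k (by rw [ih]; simp [hI])
      have hr : (backward σ α I)^[k] h ≠ σ⁻¹ r := fun hr => hout (k + 1) (by
        rw [iterate_succ_apply', ih, hr, sigmaExt_inl_inv_apply]; simp)
      rw [iterate_succ_apply', iterate_succ_apply', ih, sigmaExt_inl_of_ne σ r hr,
        backward_of_notMem hI]
  obtain ⟨q, hq, hqr⟩ := hlc h
  obtain ⟨q, rfl⟩ : ∃ m, q = m + 1 := ⟨q - 1, by omega⟩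
  rw [iterate_succ_apply'] at hqr
  have hI : (backward σ α I)^[q] h ∉ I := fun hI => hout q (by rw [hiter]; simp [hI])
  have hr := inv_apply_eq_of_backward_eq hqr
  rw [if_neg hI] at hr
  apply hout (q + 1)
  rw [iterate_succ_apply', hiter, ← hr, sigmaExt_inl_inv_apply]
  simp

theorem apply_eq_of_restrictFun_unfold {πo : Perm (H ⊕ Bool)}
    (hπo : ⇑πo = restrictFun (⇑(sigmaExt σ r)) (Sum.inl '' I ∪ {Sum.inr true}))
    {τ : Perm H} (hτ : ∀ h : H, (Sum.inl (τ h) : H ⊕ Bool) =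
      restrictFun (⇑(sigmaExt σ r * πo⁻¹)) (Set.range (Sum.inl : H → H ⊕ Bool)) (Sum.inl h))
    {h : H} (hI : h ∉ I) (hr : h ≠ σ⁻¹ r) : τ h = σ h := by
  have hF : (sigmaExt σ r * πo⁻¹) (Sum.inl h) = Sum.inl (σ h) := by
    rw [mul_apply, inv_apply_of_notMem_of_restrictFun hπo (by simpa using hI),
      sigmaExt_inl_of_ne σ r hr]
  apply Sum.inl_injective
  rw [hτ]
  exact restrictFun_eq_of_isFirstReturn ⟨h, rfl⟩ ⟨1, one_pos, hF, ⟨σ h, rfl⟩, by omega⟩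

theorem isCycleTransversal_sigmaExt_mul_inv [Finite H]
    (hlc : ∀ h : H, ∃ q : ℕ, 0 < q ∧ (backward σ α I)^[q] h = r) {πo : Perm (H ⊕ Bool)}
    (hπo : ⇑πo = restrictFun (⇑(sigmaExt σ r)) (Sum.inl '' I ∪ {Sum.inr true})) :
    IsCycleTransversal (sigmaExt σ r * πo⁻¹)
      ((Sum.inl '' I ∪ {Sum.inr true}) ∪ {Sum.inr false}) := by
  refine isCycleTransversal_mul_inv_of_restrictFun (exists_iterate_sigmaExt_mem hlc) ?_
  rw [restrictFun_union_singleton_of_apply_eq _ _ (sigmaExt_inr_false σ r), hπo]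

theorem sameCycle_sigmaExt_mul_inv_inl_inv_apply (hr : σ⁻¹ r ∉ I) {πo : Perm (H ⊕ Bool)}
    (hπo : ⇑πo = restrictFun (⇑(sigmaExt σ r)) (Sum.inl '' I ∪ {Sum.inr true})) :
    (sigmaExt σ r * πo⁻¹).SameCycle (Sum.inl (σ⁻¹ r)) (Sum.inr true) :=
  ⟨1, by rw [zpow_one, mul_apply, inv_apply_of_notMem_of_restrictFun hπo (by simpa using hr),
    sigmaExt_inl_inv_apply]⟩

theorem isCycleTransversal_unfold [Finite H]
    (hlc : ∀ h : H, ∃ q : ℕ, 0 < q ∧ (backward σ α I)^[q] h = r) (hr : σ⁻¹ r ∉ I)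
    {πo : Perm (H ⊕ Bool)}
    (hπo : ⇑πo = restrictFun (⇑(sigmaExt σ r)) (Sum.inl '' I ∪ {Sum.inr true}))
    {τ : Perm H} (hτ : ∀ h : H, (Sum.inl (τ h) : H ⊕ Bool) =
      restrictFun (⇑(sigmaExt σ r * πo⁻¹)) (Set.range (Sum.inl : H → H ⊕ Bool)) (Sum.inl h)) :
    IsCycleTransversal τ (I ∪ {σ⁻¹ r}) := by
  classical
  set F := sigmaExt σ r * πo⁻¹
  obtain ⟨hexF, huniqF⟩ := isCycleTransversal_sigmaExt_mul_inv hlc hπo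
  have hτF : ∀ {x y}, τ.SameCycle x y ↔ F.SameCycle (Sum.inl x) (Sum.inl y) :=
    sameCycle_iff_of_restrictFun_range Sum.inl_injective hτ
  have hroot := sameCycle_sigmaExt_mul_inv_inl_inv_apply hr hπo
  -- the element of `I' ∪ {o}` on the `F`-cycle through `x ∈ I ∪ {σ⁻¹ r}`
  let rep : H → H ⊕ Bool := fun x => if x = σ⁻¹ r then Sum.inr true else Sum.inl x
  have hrep : ∀ x, F.SameCycle (Sum.inl x) (rep x) := by
    intro x
    by_cases hx : x = σ⁻¹ r
    · simp only [rep, if_pos hx]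
      exact hx ▸ hroot
    · simp only [rep, if_neg hx]
      rfl
  have hrep_mem :
      ∀ x ∈ I ∪ {σ⁻¹ r}, rep x ∈ (Sum.inl '' I ∪ {Sum.inr true}) ∪ {Sum.inr false} := by
    rintro x (hx | rfl)
    · simp only [rep, if_neg (ne_of_mem_of_not_mem hx hr)]
      exact .inl (.inl ⟨x, hx, rfl⟩)
    · simp only [rep, if_pos rfl]
      exact .inl (.inr rfl)
  have hrep_inj : Injective rep := by
    intro x y
    simp only [rep]
    split_ifs with hx hy hy
    · exact fun _ => hx.trans hy.symm
    · exact False.elim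
    · exact False.elim
    · exact fun h => Sum.inl_injective h
  refine ⟨fun x => ?_, fun x hx y hy hxy => hrep_inj <| huniqF _ (hrep_mem x hx) _ (hrep_mem y hy)
    ((hrep x).symm.trans ((hτF.1 hxy).trans (hrep y)))⟩
  obtain ⟨s, hs, hxs⟩ := hexF (Sum.inl x)
  rcases hs with (⟨y, hy, rfl⟩ | rfl) | rfl
  · exact ⟨y, .inl hy, hτF.2 hxs⟩
  · exact ⟨σ⁻¹ r, .inr rfl, hτF.2 (hxs.trans hroot.symm)⟩
  · refine absurd (hxs.eq_of_right ?_) Sum.inl_ne_inr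
    rw [IsFixedPt, mul_apply, inv_apply_of_notMem_of_restrictFun hπo (by simp),
      sigmaExt_inr_false]

theorem orbit_closure_apply_eq {X : Type*} {s : Set (Perm X)} {g : Perm X} (hg : g ∈ s) (x : X) :
    MulAction.orbit (Subgroup.closure s) (g x) = MulAction.orbit (Subgroup.closure s) x :=
  MulAction.orbit_smul (⟨g, Subgroup.subset_closure hg⟩ : Subgroup.closure s) x

theorem orbit_closure_eq_orbit_inv_apply {τ : Perm H} (hαI : ∀ h ∈ I, α h ∉ I)
    (hlc : ∀ h : H, ∃ q : ℕ, 0 < q ∧ (backward σ α I)^[q] h = r)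
    (hτσ : ∀ h, h ∉ I → h ≠ σ⁻¹ r → τ h = σ h) (x : H) :
    MulAction.orbit (Subgroup.closure {τ, α}) x =
      MulAction.orbit (Subgroup.closure {τ, α}) (σ⁻¹ r) := by
  classical
  set G := Subgroup.closure ({τ, α} : Set (Perm H))
  have hτ : ∀ h, MulAction.orbit G (τ h) = MulAction.orbit G h :=
    orbit_closure_apply_eq (by simp)
  have hα : ∀ h, MulAction.orbit G (α h) = MulAction.orbit G h :=
    orbit_closure_apply_eq (by simp)
  have hlast : ∀ h, backward σ α I h = r → MulAction.orbit G h = MulAction.orbit G (σ⁻¹ r) := by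
    intro h hh
    rw [inv_apply_eq_of_backward_eq hh]
    split_ifs
    exacts [(hα h).symm, rfl]
  have hstep : ∀ h, MulAction.orbit G (backward σ α I h) = MulAction.orbit G (σ⁻¹ r) →
      MulAction.orbit G h = MulAction.orbit G (σ⁻¹ r) := by
    intro h hb
    by_cases hI : h ∈ I
    · by_cases hαh : α h = σ⁻¹ r
      · rw [← hαh, hα]
      · rwa [backward_of_mem hI, ← hτσ _ (hαI h hI) hαh, hτ, hα] at hb
    · by_cases hr : h = σ⁻¹ r
      · rw [hr]
      · rwa [backward_of_notMem hI, ← hτσ h hI hr, hτ] at hb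
  have hpath : ∀ q h, (backward σ α I)^[q + 1] h = r →
      MulAction.orbit G h = MulAction.orbit G (σ⁻¹ r) := by
    intro q
    induction q with
    | zero => exact hlast
    | succ q ih => exact fun h hq => hstep h (ih _ hq)
  obtain ⟨q, hq, hqr⟩ := hlc x
  obtain ⟨q, rfl⟩ : ∃ m, q = m + 1 := ⟨q - 1, by omega⟩
  exact hpath q x hqr

end Unfolding

theorem unfolded_tree_is_plane_tree_general {H : Type*} [Fintype H] (n : ℕ)
    (hcard : Fintype.card H = 2 * n)
    (σ α : Equiv.Perm H) (r : H) (I O : Set H)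
    (hpart : I ∪ O = Set.univ) (hdisj : I ∩ O = ∅) (hIO : α '' I = O)
    (hlc : ∀ h : H, ∃ q : ℕ, 0 < q ∧ (backward σ α I)^[q] h = r)
    (πo : Equiv.Perm (H ⊕ Bool))
    (hπo : ⇑πo = restrictFun (⇑(sigmaExt σ r))
      (Sum.inl '' I ∪ {Sum.inr true}))
    (τ : Equiv.Perm H)
    (hτ : ∀ h : H, (Sum.inl (τ h) : H ⊕ Bool) =
      restrictFun (⇑(sigmaExt σ r * πo⁻¹))
        (Set.range (Sum.inl : H → H ⊕ Bool)) (Sum.inl h)) :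
    (∀ x y : H, ∃ g ∈ Subgroup.closure ({τ, α} : Set (Equiv.Perm H)), g x = y) ∧
    numOrbitsOn (⇑τ) Set.univ = n + 1 ∧
    (∀ x y : H, x ∈ I → y ∈ I → τ.SameCycle x y → x = y) := by
  have hαI : ∀ h ∈ I, α h ∉ I := fun h hh hαh =>
    Set.eq_empty_iff_forall_notMem.1 hdisj (α h) ⟨hαh, hIO ▸ Set.mem_image_of_mem α hh⟩
  have hr : σ⁻¹ r ∉ I := inv_apply_notMem hαI hlc
  have hT : IsCycleTransversal τ (I ∪ {σ⁻¹ r}) := isCycleTransversal_unfold hlc hr hπo hτ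
  refine ⟨fun x y => ?_, ?_, fun x y hx hy => hT.2 x (.inl hx) y (.inl hy)⟩
  · have hconn := orbit_closure_eq_orbit_inv_apply hαI hlc
      fun h hI hh => apply_eq_of_restrictFun_unfold hπo hτ hI hh
    obtain ⟨g, hg⟩ := MulAction.mem_orbit_iff.1 <|
      (hconn y).trans (hconn x).symm ▸ MulAction.mem_orbit_self y
    exact ⟨g, g.2, hg⟩
  · have hI := two_mul_ncard_eq_natCard_of_image_eq hpart hdisj hIO
    rw [Nat.card_eq_fintype_card, hcard] at hI
    rw [numOrbitsOn_univ_eq_ncard hT, Set.ncard_union_eq (Set.disjoint_singleton_right.2 hr),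
      Set.ncard_singleton]
    omega

/-- for a left-connected orientation `(I,O)` on a map with `2n`
half-edges, the permutation `τ = (σ'∘π_∘⁻¹)_{|H}` of the unfolding construction, where
`π_∘ = σ'_{|I'}`, is a plane tree with `n` edges ((a) transitivity, (b) `n+1` orbits),
and `(I,O)` is its root-to-leaves orientation ((c) each `τ`-orbit contains at most one
ingoing half-edge). -/
theorem unfolded_tree_is_plane_tree {H : Type*} [Fintype H] (n : ℕ) (hn : 1 ≤ n)
    (hcard : Fintype.card H = 2 * n)
    (σ α : Equiv.Perm H) (hmap : IsCombMap σ α) (r : H) (I O : Set H)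
    (hpart : I ∪ O = Set.univ) (hdisj : I ∩ O = ∅) (hIO : α '' I = O)
    (hlc : ∀ h : H, ∃ q : ℕ, 0 < q ∧ (backward σ α I)^[q] h = r)
    (πo : Equiv.Perm (H ⊕ Bool))
    (hπo : ⇑πo = restrictFun (⇑(sigmaExt σ r))
      (Sum.inl '' I ∪ {Sum.inr true}))
    (τ : Equiv.Perm H)
    (hτ : ∀ h : H, (Sum.inl (τ h) : H ⊕ Bool) =
      restrictFun (⇑(sigmaExt σ r * πo⁻¹))
        (Set.range (Sum.inl : H → H ⊕ Bool)) (Sum.inl h)) :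
    (∀ x y : H, ∃ g ∈ Subgroup.closure ({τ, α} : Set (Equiv.Perm H)), g x = y) ∧
    numOrbitsOn (⇑τ) Set.univ = n + 1 ∧
    (∀ x y : H, x ∈ I → y ∈ I → τ.SameCycle x y → x = y) :=
  unfolded_tree_is_plane_tree_general n hcard σ α r I O hpart hdisj hIO hlc πo hπo τ hτ
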